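/- Let M1, M2 be integers with 4 ≤ M1 ≤ M2. Then the restricted sum Ṙ(M1,M2) = (1/(M1·M2)) · Σ_{i=1}^{M1−1} Σ_{j=1}^{M2−1} 1/(4 − 2·cos(2πi/M1) − 2·cos(2πj/M2)) satisfies Ṙ(M1,M2) ≤ (1/(2π))·log M2 + (2/π²)·(M1/M2) + 1/5, where log denotes the natural logarithm. -/

import Mathlib

/-!
For fixed `i`, the inner sum over `j` is a Riemann sum of `x ↦ 1 / (A - 2 cos (2πx / M2))` with
`A = 4 - 2 cos (2πi / M1) = 2 + 4 sin² (πi / M1)`. This function decreases and then increases on a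
period, so the sum is at most its integral, which the Poisson kernel evaluates to
`M2 / √(A² - 4) ≤ M2 / (4 sin (πi / M1))`. The resulting sum of `csc (πi / M1)` is compared with
`∫ csc = log tan (· / 2)` in the same way, apart from its two extreme terms, and gives
`(2 M1 / π) log (2 M1 / π) + (4 / 5) M1`. Finally `2 M1 / π ≤ M2`.
-/

open Real Finset

/-- The restricted average resistance sum `Ṙ(M1,M2)`: the part of the average effective
resistance of the toroidal grid `T_{M1,M2}` coming from eigenvalue indices with both
coordinates nonzero. -/
noncomputable def RaveRing (M1 M2 : ℕ) : ℝ :=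
  (1 / ((M1 : ℝ) * M2)) * ∑ i ∈ Finset.Icc 1 (M1 - 1), ∑ j ∈ Finset.Icc 1 (M2 - 1),
    1 / (4 - 2 * Real.cos (2 * Real.pi * i / M1) - 2 * Real.cos (2 * Real.pi * j / M2))

lemma sum_Ioo_le_integral_of_antitoneOn_of_monotoneOn {f : ℝ → ℝ} {k n : ℕ} {c : ℝ}
    (hkc : (k : ℝ) ≤ c) (hcn : c < n) (hanti : AntitoneOn f (Set.Icc k c))
    (hmono : MonotoneOn f (Set.Icc c n)) (hf : ∀ x ∈ Set.Icc (k : ℝ) n, 0 ≤ f x) :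
    ∑ j ∈ Ioo k n, f j ≤ ∫ x in (k : ℝ)..n, f x := by
  set m := ⌊c⌋₊
  have hc0 : 0 ≤ c := (Nat.cast_nonneg k).trans hkc
  have hkm : k ≤ m := Nat.le_floor hkc
  have hmc : (m : ℝ) ≤ c := Nat.floor_le hc0
  have hcm : c ≤ ((m + 1 : ℕ) : ℝ) := by push_cast; exact (Nat.lt_floor_add_one c).le
  have hmn : m + 1 ≤ n := (Nat.floor_lt hc0).2 hcn
  have hanti' : AntitoneOn f (Set.Icc k m) := hanti.mono (Set.Icc_subset_Icc_right hmc)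
  have hmono' : MonotoneOn f (Set.Icc ((m + 1 : ℕ) : ℝ) n) :=
    hmono.mono (Set.Icc_subset_Icc_left hcm)
  have hkm' : (k : ℝ) ≤ m := by exact_mod_cast hkm
  have hmn' : ((m + 1 : ℕ) : ℝ) ≤ n := by exact_mod_cast hmn
  have hint_left : IntervalIntegrable f MeasureTheory.volume k m :=
    AntitoneOn.intervalIntegrable (by rwa [Set.uIcc_of_le hkm'])
  have hint_mid : IntervalIntegrable f MeasureTheory.volume m ((m + 1 : ℕ) : ℝ) :=
    (AntitoneOn.intervalIntegrable (a := (m : ℝ)) (b := c) (by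
      rw [Set.uIcc_of_le hmc]; exact hanti.mono (Set.Icc_subset_Icc_left hkm'))).trans
    (MonotoneOn.intervalIntegrable (by
      rw [Set.uIcc_of_le hcm]; exact hmono.mono (Set.Icc_subset_Icc_right hmn')))
  have hint_right : IntervalIntegrable f MeasureTheory.volume ((m + 1 : ℕ) : ℝ) n :=
    MonotoneOn.intervalIntegrable (by rwa [Set.uIcc_of_le hmn'])
  have hmid_nonneg : 0 ≤ ∫ x in (m : ℝ)..((m + 1 : ℕ) : ℝ), f x :=
    intervalIntegral.integral_nonneg (hmc.trans hcm) fun x hx =>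
      hf x ⟨hkm'.trans hx.1, hx.2.trans hmn'⟩
  have hsplit : ∑ j ∈ Ioo k n, f j = ∑ i ∈ Ico k m, f ↑(i + 1) + ∑ j ∈ Ico (m + 1) n, f j := by
    rw [← Ico_add_one_left_eq_Ioo, ← sum_Ico_consecutive _ (by omega : k + 1 ≤ m + 1) hmn,
      sum_Ico_add' (fun j : ℕ => f j)]
  rw [hsplit, ← intervalIntegral.integral_add_adjacent_intervals hint_left
    (hint_mid.trans hint_right), ← intervalIntegral.integral_add_adjacent_intervals hint_mid
    hint_right]
  linarith [hanti'.sum_le_integral_Ico hkm, hmono'.sum_le_integral_Ico hmn]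

lemma one_sub_mul_cos_pos {r : ℝ} (hr : |r| < 1) (x : ℝ) : 0 < 1 - r * cos x := by
  have : |r * cos x| < 1 := by
    rw [abs_mul]; exact lt_of_le_of_lt (mul_le_of_le_one_right (abs_nonneg r) (abs_cos_le_one x)) hr
  linarith [le_abs_self (r * cos x)]

lemma hasDerivAt_poissonKernel_primitive {r : ℝ} (hr : |r| < 1) (x : ℝ) :
    HasDerivAt (fun φ => φ + 2 * arctan (r * sin φ / (1 - r * cos φ)))
      ((1 - r ^ 2) / (1 - 2 * r * cos x + r ^ 2)) x := by
  have hD := one_sub_mul_cos_pos hr x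
  have hquot : HasDerivAt (fun φ => r * sin φ / (1 - r * cos φ))
      ((r * cos x * (1 - r * cos x) - r * sin x * (r * sin x)) / (1 - r * cos x) ^ 2) x := by
    refine ((hasDerivAt_sin x).const_mul r).div ?_ hD.ne'
    simpa using ((hasDerivAt_cos x).const_mul r).const_sub 1
  refine ((hasDerivAt_id' x).add (hquot.arctan.const_mul 2)).congr_deriv ?_
  have hsum : (1 - r * cos x) ^ 2 + (r * sin x) ^ 2 = 1 - 2 * r * cos x + r ^ 2 := by
    linear_combination r ^ 2 * sin_sq_add_cos_sq x
  rw [div_pow, ← hsum]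
  field_simp
  linear_combination (-r ^ 2) * sin_sq_add_cos_sq x

lemma integral_poissonKernel {r : ℝ} (hr : |r| < 1) :
    ∫ φ in (0 : ℝ)..2 * π, (1 - r ^ 2) / (1 - 2 * r * cos φ + r ^ 2) = 2 * π := by
  have hden : ∀ φ, 0 < 1 - 2 * r * cos φ + r ^ 2 := fun φ => by
    nlinarith [one_sub_mul_cos_pos hr φ, sin_sq_add_cos_sq φ, sq_nonneg (r * sin φ)]
  rw [intervalIntegral.integral_eq_sub_of_hasDerivAt
    (fun x _ => hasDerivAt_poissonKernel_primitive hr x)]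
  · simp
  · exact (continuous_const.div (by fun_prop) fun φ => (hden φ).ne').intervalIntegrable _ _

lemma integral_one_div_sub_two_mul_cos {A : ℝ} (hA : 2 < A) :
    ∫ θ in (0 : ℝ)..2 * π, 1 / (A - 2 * cos θ) = 2 * π / √(A ^ 2 - 4) := by
  set s := √(A ^ 2 - 4)
  have hs2 : s ^ 2 = A ^ 2 - 4 := sq_sqrt (by nlinarith)
  have hs0 : 0 < s := sqrt_pos.2 (by nlinarith)
  have hsA : s < A := by nlinarith
  -- `r` is the root in `(0, 1)` of `r + r⁻¹ = A`.
  set r := (A - s) / 2 with hr_def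
  have hr0 : 0 < r := by linarith
  have hr : |r| < 1 := abs_lt.2 ⟨by linarith, by nlinarith⟩
  have hnum : 1 - r ^ 2 = r * s := by rw [hr_def]; linear_combination (1/4 : ℝ) * hs2
  have hden : ∀ θ, 1 - 2 * r * cos θ + r ^ 2 = r * (A - 2 * cos θ) := fun θ => by
    rw [hr_def]; linear_combination (1/4 : ℝ) * hs2
  have hkernel : ∀ θ, 1 / (A - 2 * cos θ) = s⁻¹ * ((1 - r ^ 2) / (1 - 2 * r * cos θ + r ^ 2)) := by
    intro θ
    rw [hnum, hden, mul_div_mul_left _ _ hr0.ne']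
    field_simp
  simp_rw [hkernel, intervalIntegral.integral_const_mul, integral_poissonKernel hr]
  ring

lemma sum_one_div_sub_two_mul_cos_le {M : ℕ} (hM : 0 < M) {A : ℝ} (hA : 2 < A) :
    ∑ j ∈ Icc 1 (M - 1), 1 / (A - 2 * cos (2 * π * j / M)) ≤ M / √(A ^ 2 - 4) := by
  have hM' : (0 : ℝ) < M := by exact_mod_cast hM
  have hpos : ∀ x, 0 < A - 2 * cos (2 * π * x / M) := fun x => by
    linarith [cos_le_one (2 * π * x / M)]
  have hangle : ∀ x, 2 * π * x / M = 2 * π - 2 * π * (M - x) / M := fun x => by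
    field_simp; ring
  have hanti :
      AntitoneOn (fun x : ℝ => 1 / (A - 2 * cos (2 * π * x / M))) (Set.Icc 0 (M / 2)) := by
    intro x hx y hy hxy
    refine one_div_le_one_div_of_le (hpos x) ?_
    have : cos (2 * π * y / M) ≤ cos (2 * π * x / M) := by
      apply cos_le_cos_of_nonneg_of_le_pi (by have := hx.1; positivity)
      · rw [div_le_iff₀ hM']; nlinarith [hy.2, pi_pos]
      · gcongr
    linarith
  have hmono :
      MonotoneOn (fun x : ℝ => 1 / (A - 2 * cos (2 * π * x / M))) (Set.Icc (M / 2) M) := by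
    intro x hx y hy hxy
    refine one_div_le_one_div_of_le (hpos y) ?_
    have : cos (2 * π * x / M) ≤ cos (2 * π * y / M) := by
      rw [hangle x, hangle y, cos_two_pi_sub, cos_two_pi_sub]
      have hMy : 0 ≤ (M : ℝ) - y := by linarith [hy.2]
      apply cos_le_cos_of_nonneg_of_le_pi (by positivity)
      · rw [div_le_iff₀ hM']; nlinarith [hx.1, pi_pos]
      · gcongr
    linarith
  have hintegral : ∫ x in (0 : ℝ)..M, 1 / (A - 2 * cos (2 * π * x / M)) = M / √(A ^ 2 - 4) := by
    have := intervalIntegral.integral_comp_mul_left (fun θ => 1 / (A - 2 * cos θ))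
      (a := 0) (b := M) (div_ne_zero two_pi_pos.ne' hM'.ne' : 2 * π / M ≠ 0)
    simp only [mul_zero, div_mul_cancel₀ _ hM'.ne', integral_one_div_sub_two_mul_cos hA] at this
    simp_rw [mul_div_right_comm (2 * π)]
    rw [this, smul_eq_mul]
    field_simp
  have hIcc : Icc 1 (M - 1) = Ioo 0 M := by ext; simp; omega
  rw [hIcc, ← hintegral]
  simpa using sum_Ioo_le_integral_of_antitoneOn_of_monotoneOn (k := 0) (by simp; positivity)
    (by linarith) (by simpa using hanti) hmono fun x _ => (one_div_pos.2 (hpos x)).le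

lemma hasDerivAt_log_tan_half {x : ℝ} (hx0 : 0 < x) (hxπ : x < π) :
    HasDerivAt (fun y => log (tan (y / 2))) (1 / sin x) x := by
  have hcos : 0 < cos (x / 2) := cos_pos_of_mem_Ioo ⟨by linarith, by linarith⟩
  have hsin : 0 < sin (x / 2) := sin_pos_of_pos_of_lt_pi (by linarith) (by linarith)
  have htan : HasDerivAt (fun y => tan (y / 2)) (1 / cos (x / 2) ^ 2 * (1 / 2)) x :=
    (Real.hasDerivAt_tan hcos.ne').comp (h := fun y => y / 2) x ((hasDerivAt_id' x).div_const 2)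
  refine (htan.log (by rw [tan_eq_sin_div_cos]; positivity)).congr_deriv ?_
  have hsin_x : sin x = 2 * sin (x / 2) * cos (x / 2) := by rw [← sin_two_mul]; ring_nf
  rw [tan_eq_sin_div_cos, hsin_x]
  field_simp

lemma integral_one_div_sin_le {a : ℝ} (ha0 : 0 < a) (ha : a ≤ π / 2) :
    ∫ x in a..π - a, 1 / sin x ≤ 2 * log (2 / a) := by
  have hmem : ∀ x ∈ Set.uIcc a (π - a), 0 < x ∧ x < π := fun x hx => by
    rw [Set.uIcc_of_le (by linarith)] at hx
    exact ⟨by linarith [hx.1], by linarith [hx.2]⟩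
  rw [intervalIntegral.integral_eq_sub_of_hasDerivAt
    (fun x hx => hasDerivAt_log_tan_half (hmem x hx).1 (hmem x hx).2)
    (ContinuousOn.intervalIntegrable (continuousOn_const.div continuousOn_sin
      fun x hx => (sin_pos_of_pos_of_lt_pi (hmem x hx).1 (hmem x hx).2).ne')),
    show (π - a) / 2 = π / 2 - a / 2 by ring, tan_pi_div_two_sub, log_inv]
  have : log (a / 2) ≤ log (tan (a / 2)) :=
    log_le_log (by positivity) (le_tan (by positivity) (by linarith))
  rw [← neg_neg (log (a / 2)), ← log_inv, inv_div] at this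
  linarith

lemma one_div_sin_pi_div_le {M : ℝ} (hM : 4 ≤ M) : 1 / sin (π / M) ≤ 2 * M / 5 := by
  have hM0 : 0 < M := by linarith
  have hcube : 5 / (2 * M) ≤ π / M - (π / M) ^ 3 / 6 := by
    rw [div_pow, show π / M - π ^ 3 / M ^ 3 / 6 = (π - π ^ 3 / (6 * M ^ 2)) / M by field_simp,
      div_le_div_iff₀ (by positivity) hM0]
    have : π ^ 3 / (6 * M ^ 2) ≤ π ^ 3 / 96 := by gcongr; nlinarith
    nlinarith [pi_gt_three, pi_lt_d2, pow_le_pow_left₀ pi_pos.le pi_lt_d2.le 3]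
  calc 1 / sin (π / M) ≤ 1 / (5 / (2 * M)) :=
        one_div_le_one_div_of_le (by positivity) (hcube.trans (sin_gt_sub_cube (by positivity)).le)
    _ = 2 * M / 5 := by rw [one_div_div]

lemma integral_one_div_sin_pi_mul_div_le {M : ℝ} (hM : 2 ≤ M) :
    ∫ x in (1 : ℝ)..M - 1, 1 / sin (π * x / M) ≤ 2 * M / π * log (2 * M / π) := by
  have hM0 : 0 < M := by linarith
  simp_rw [mul_div_right_comm π]
  rw [intervalIntegral.integral_comp_mul_left (fun θ => 1 / sin θ) (div_pos pi_pos hM0).ne',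
    smul_eq_mul, show π / M * (M - 1) = π - π / M by field_simp, mul_one, inv_div]
  calc M / π * ∫ x in π / M..π - π / M, 1 / sin x ≤ M / π * (2 * log (2 / (π / M))) := by
        gcongr
        exact integral_one_div_sin_le (by positivity)
          (div_le_div_of_nonneg_left pi_pos.le two_pos (by linarith))
    _ = 2 * M / π * log (2 * M / π) := by rw [div_div_eq_mul_div]; ring

lemma sum_one_div_sin_le {M : ℕ} (hM : 4 ≤ M) :
    ∑ i ∈ Icc 1 (M - 1), 1 / sin (π * i / M) ≤ 2 * M / π * log (2 * M / π) + 4 / 5 * M := by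
  have hM' : (4 : ℝ) ≤ M := by exact_mod_cast hM
  have hM0 : (0 : ℝ) < M := by linarith
  have hcast : ((M - 1 : ℕ) : ℝ) = M - 1 := by rw [Nat.cast_sub (by omega), Nat.cast_one]
  have hsin_pos : ∀ x : ℝ, 0 < x → x < M → 0 < sin (π * x / M) := fun x hx0 hxM =>
    sin_pos_of_pos_of_lt_pi (by positivity) (by rw [div_lt_iff₀ hM0]; nlinarith [pi_pos])
  have hangle : ∀ x : ℝ, π * x / M = π - π * (M - x) / M := fun x => by field_simp; ring
  have hanti : AntitoneOn (fun x : ℝ => 1 / sin (π * x / M)) (Set.Icc 1 (M / 2)) := by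
    intro x hx y hy hxy
    refine one_div_le_one_div_of_le (hsin_pos x (by linarith [hx.1]) (by linarith [hx.2])) ?_
    have hx0 : 0 ≤ x := by linarith [hx.1]
    apply sin_le_sin_of_le_of_le_pi_div_two (by linarith [pi_pos, show 0 ≤ π * x / M by positivity])
    · rw [div_le_iff₀ hM0]; nlinarith [hy.2, pi_pos]
    · gcongr
  have hmono : MonotoneOn (fun x : ℝ => 1 / sin (π * x / M)) (Set.Icc (M / 2) (M - 1)) := by
    intro x hx y hy hxy
    refine one_div_le_one_div_of_le (hsin_pos y (by linarith [hy.1]) (by linarith [hy.2])) ?_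
    rw [hangle x, hangle y, sin_pi_sub, sin_pi_sub]
    have hMy : 0 ≤ (M : ℝ) - y := by linarith [hy.2]
    apply sin_le_sin_of_le_of_le_pi_div_two
      (by linarith [pi_pos, show 0 ≤ π * (M - y) / M by positivity])
    · rw [div_le_iff₀ hM0]; nlinarith [hx.1, pi_pos]
    · gcongr
  have hmiddle := sum_Ioo_le_integral_of_antitoneOn_of_monotoneOn (k := 1) (n := M - 1)
    (c := M / 2) (by simp; linarith) (by rw [hcast]; linarith) (by simpa using hanti)
    (by rwa [hcast]) fun x hx => (one_div_pos.2 (hsin_pos x (by simp at hx; linarith [hx.1])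
      (by rw [hcast] at hx; linarith [hx.2]))).le
  rw [Nat.cast_one, hcast] at hmiddle
  have hintegral := integral_one_div_sin_pi_mul_div_le (by linarith : (2 : ℝ) ≤ M)
  have hend : 1 / sin (π * ((M - 1 : ℕ) : ℝ) / M) = 1 / sin (π / M) := by
    rw [hcast, hangle, sin_pi_sub, sub_sub_cancel, mul_one]
  have hend_le := one_div_sin_pi_div_le hM'
  rw [← Ico_insert_right (by omega), ← Ioo_insert_left (by omega), sum_insert (by simp; omega),
    sum_insert (by simp), hend, Nat.cast_one, mul_one]
  linarith

lemma sum_one_div_four_sub_two_mul_cos_le {M : ℕ} (hM : 0 < M) {θ : ℝ} (hθ : 0 < sin θ) :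
    ∑ j ∈ Icc 1 (M - 1), 1 / (4 - 2 * cos (2 * θ) - 2 * cos (2 * π * j / M)) ≤
      M / 4 * (1 / sin θ) := by
  have hA : 4 - 2 * cos (2 * θ) = 2 + 4 * sin θ ^ 2 := by
    rw [cos_two_mul, cos_sq']; ring
  have hsqrt : 4 * sin θ ≤ √((4 - 2 * cos (2 * θ)) ^ 2 - 4) :=
    le_sqrt_of_sq_le (by rw [hA]; nlinarith [pow_nonneg (sq_nonneg (sin θ)) 2])
  calc _ ≤ M / √((4 - 2 * cos (2 * θ)) ^ 2 - 4) :=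
        sum_one_div_sub_two_mul_cos_le hM (by rw [hA]; nlinarith)
    _ ≤ M / (4 * sin θ) := by gcongr
    _ = M / 4 * (1 / sin θ) := by ring

theorem restricted_sum_upper (M1 M2 : ℕ) (h1 : 4 ≤ M1) (h12 : M1 ≤ M2) :
    RaveRing M1 M2 ≤ (1 / (2 * Real.pi)) * Real.log M2
      + (2 / Real.pi ^ 2) * ((M1 : ℝ) / M2) + 1 / 5 := by
  have hM1 : (4 : ℝ) ≤ M1 := by exact_mod_cast h1
  have hM12 : (M1 : ℝ) ≤ M2 := by exact_mod_cast h12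
  have hM2 : (0 : ℝ) < M2 := by linarith
  have hrow : ∀ i ∈ Icc 1 (M1 - 1), ∑ j ∈ Icc 1 (M2 - 1),
      1 / (4 - 2 * cos (2 * π * i / M1) - 2 * cos (2 * π * j / M2)) ≤
        M2 / 4 * (1 / sin (π * i / M1)) := fun i hi => by
    have hi0 : (0 : ℝ) < i := by simp at hi; exact_mod_cast hi.1
    have hiM : (i : ℝ) < M1 := by simp at hi; exact_mod_cast (by omega : i < M1)
    rw [show 2 * π * i / M1 = 2 * (π * i / M1) by ring]
    exact sum_one_div_four_sub_two_mul_cos_le (by omega) (sin_pos_of_pos_of_lt_pi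
      (by positivity) (by rw [div_lt_iff₀ (by linarith)]; nlinarith [pi_pos]))
  calc RaveRing M1 M2
      ≤ 1 / ((M1 : ℝ) * M2) * (M2 / 4 * ∑ i ∈ Icc 1 (M1 - 1), 1 / sin (π * i / M1)) := by
        rw [RaveRing, mul_sum _ _ (M2 / 4 : ℝ)]; gcongr with i hi; exact hrow i hi
    _ ≤ 1 / ((M1 : ℝ) * M2) * (M2 / 4 * (2 * M1 / π * log (2 * M1 / π) + 4 / 5 * M1)) := by
        gcongr; exact sum_one_div_sin_le h1
    _ = 1 / (2 * π) * log (2 * M1 / π) + 1 / 5 := by field_simp; ring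
    _ ≤ 1 / (2 * π) * log M2 + 2 / π ^ 2 * (M1 / M2) + 1 / 5 := by
        have hlog : log (2 * M1 / π) ≤ log M2 :=
          log_le_log (by positivity) (by rw [div_le_iff₀ pi_pos]; nlinarith [pi_gt_three])
        have : 0 ≤ 2 / π ^ 2 * ((M1 : ℝ) / M2) := by positivity
        linarith [mul_le_mul_of_nonneg_left hlog (by positivity : (0 : ℝ) ≤ 1 / (2 * π))]
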